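/- Let G be an abelian topological group and K ⊆ Ĝ. Then K is equicontinuous if and only if the inverse polar K^◁ = {g ∈ G : χ(g) ∈ S₊ for all χ ∈ K} is a neighborhood of zero in G. In that case, the quasi-convex hull qc((n)K) in Ĝ is equicontinuous for every positive integer n. -/

import Mathlib

open scoped Pointwise Topology
open Complex Real

variable (G : Type*) [AddCommGroup G] [TopologicalSpace G] [IsTopologicalAddGroup G]

/-- A (continuous) character of `G` with values in the circle group. -/
def IsChar (χ : G → Circle) : Prop :=
  Continuous χ ∧ ∀ x y : G, χ (x + y) = χ x * χ y

/-- `S₊ = {z ∈ S : Re z ≥ 0}`. -/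
def Splus : Set Circle := {z | 0 ≤ (z : ℂ).re}

/-- The character group `Ĝ`, as a set of functions `G → Circle`. -/
def charSet : Set (G → Circle) := {χ | IsChar G χ}

/-- The inverse polar `B^◁ = {g ∈ G : χ(g) ∈ S₊ ∀ χ ∈ B}` of a set of characters. -/
def invPolar (B : Set (G → Circle)) : Set G := {g | ∀ χ ∈ B, χ g ∈ Splus}

/-- The polar `A^▷ = {χ ∈ Ĝ : χ(A) ⊆ S₊}` of a subset of `G`. -/
def polarG (A : Set G) : Set (G → Circle) := {χ | IsChar G χ ∧ ∀ g ∈ A, χ g ∈ Splus}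

/-- The `n`-fold sumset `(n)K` of a set of characters (written multiplicatively). -/
def mpow (K : Set (G → Circle)) : ℕ → Set (G → Circle)
  | 0 => {1}
  | n + 1 => mpow K n * K

/-- The `n`-fold sumset `(n)A` of a subset of `G`. -/
def addPow (A : Set G) : ℕ → Set G
  | 0 => {0}
  | n + 1 => addPow A n + A

/-- `C₍ₙ₎ = {g ∈ G : g, 2g, …, ng ∈ C}`. -/
def seg (n : ℕ) (C : Set G) : Set G := {g | ∀ k ∈ Finset.Icc 1 n, k • g ∈ C}

/-- A set of characters is equicontinuous. -/
def Equicont (K : Set (G → Circle)) : Prop :=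
  ∀ V ∈ 𝓝 (1 : Circle), ∃ U ∈ 𝓝 (0 : G), ∀ χ ∈ K, ∀ g ∈ U, χ g ∈ V

/-!
Measure the values of characters by angles: `arc c` is the closed arc of half-width `c` around `1`
in the circle, and `S₊ = arc (π/2)`. If `z, z², …, zⁿ ∈ S₊` then `z ∈ arc (π/(2n))`, because the
angles `k · arg z` grow in steps smaller than a quarter turn and so cannot jump over the quarter
turn where the cosine changes sign. Hence, when `K^◁` is a neighbourhood of `0`, so is
`{g | g, 2g, …, ng ∈ K^◁}`, and it is mapped into `arc (π/(2n))` by every `χ ∈ K`; as these arcs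
shrink to `1`, `K` is equicontinuous. Conversely, if `χ(U) ⊆ arc (π/(2n))` for all `χ ∈ K`, then
every product of `n` members of `K` maps `U` into `arc (π/2) ⊆ S₊`, so `((n)K)^◁ ⊇ U`. The polar of
a neighbourhood of `0` is then equicontinuous by the first part, which gives the claim about
`qc((n)K) = ((n)K)^◁▷`.
-/

lemma le_pi_div_two_of_cos_nonneg {x : ℝ} (hπ : x ≤ π) (hcos : 0 ≤ Real.cos x) :
    x ≤ π / 2 := by
  by_contra! h
  linarith [Real.cos_neg_of_pi_div_two_lt_of_lt h (by linarith [Real.pi_pos])]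

lemma mul_le_pi_div_two_of_cos_nonneg {θ : ℝ} (h0 : 0 ≤ θ) (hπ : θ ≤ π) :
    ∀ n : ℕ, (∀ k ∈ Finset.Icc 1 n, 0 ≤ Real.cos (k * θ)) → n * θ ≤ π / 2
  | 0, _ => by rw [Nat.cast_zero, zero_mul]; positivity
  | n + 1, hcos => by
    have hn : n * θ ≤ π / 2 :=
      mul_le_pi_div_two_of_cos_nonneg h0 hπ n fun k hk ↦
        hcos k (Finset.Icc_subset_Icc_right n.le_succ hk)
    push_cast
    refine le_pi_div_two_of_cos_nonneg ?_ (by exact_mod_cast hcos (n + 1) (by simp))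
    rcases n.eq_zero_or_pos with rfl | hpos
    · simpa using hπ
    · have : θ ≤ n * θ := le_mul_of_one_le_left h0 (by exact_mod_cast hpos)
      linarith

def arc (c : ℝ) : Set Circle := Circle.exp '' Set.Icc (-c) c

lemma arc_mono {c d : ℝ} (h : c ≤ d) : arc c ⊆ arc d :=
  Set.image_mono (Set.Icc_subset_Icc (neg_le_neg h) h)

lemma one_mem_arc_zero : (1 : Circle) ∈ arc 0 :=
  ⟨0, by simp, Circle.exp_zero⟩

lemma mul_mem_arc {z w : Circle} {a b : ℝ} (hz : z ∈ arc a) (hw : w ∈ arc b) :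
    z * w ∈ arc (a + b) := by
  obtain ⟨θ, ⟨hθl, hθr⟩, rfl⟩ := hz
  obtain ⟨η, ⟨hηl, hηr⟩, rfl⟩ := hw
  exact ⟨θ + η, ⟨by linarith, by linarith⟩, Circle.exp_add θ η⟩

lemma mem_arc_of_arg_mem_Icc {z : Circle} {c : ℝ} (h : Complex.arg z ∈ Set.Icc (-c) c) :
    z ∈ arc c :=
  ⟨Complex.arg z, h, Circle.exp_arg z⟩

lemma arc_subset_Splus {c : ℝ} (hc : c ≤ π / 2) : arc c ⊆ Splus := by
  rintro _ ⟨θ, ⟨hθl, hθr⟩, rfl⟩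
  simp only [Splus, Set.mem_ofPred_eq, Circle.coe_exp, Complex.exp_ofReal_mul_I_re]
  exact Real.cos_nonneg_of_mem_Icc ⟨by linarith, by linarith⟩

lemma arc_mem_nhds {c : ℝ} (hc : 0 < c) : arc c ∈ 𝓝 (1 : Circle) := by
  have hcont : ContinuousAt (fun z : Circle => Complex.arg z) 1 :=
    (Complex.continuousAt_arg (by simp)).comp continuous_subtype_val.continuousAt
  have hsmall : Set.Icc (-c) c ∈ 𝓝 (Complex.arg ((1 : Circle) : ℂ)) := by
    rw [Circle.coe_one, Complex.arg_one]
    exact Icc_mem_nhds (neg_neg_of_pos hc) hc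
  exact Filter.mem_of_superset (hcont.preimage_mem_nhds hsmall) fun _ ↦ mem_arc_of_arg_mem_Icc

lemma exists_arc_subset {V : Set Circle} (hV : V ∈ 𝓝 (1 : Circle)) : ∃ ε > 0, arc ε ⊆ V := by
  have hexp : Circle.exp ⁻¹' V ∈ 𝓝 (0 : ℝ) :=
    Circle.exp.continuous.continuousAt.preimage_mem_nhds (by rwa [Circle.exp_zero])
  obtain ⟨ε, hε, hball⟩ := Metric.mem_nhds_iff.1 hexp
  refine ⟨ε / 2, by positivity, ?_⟩
  rintro _ ⟨θ, hθ, rfl⟩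
  apply hball
  rw [Metric.mem_ball, Real.dist_0_eq_abs]
  exact (abs_le.2 hθ).trans_lt (half_lt_self hε)

lemma mem_arc_of_pow_mem_Splus {z : Circle} {n : ℕ} (hn : 0 < n)
    (h : ∀ k ∈ Finset.Icc 1 n, z ^ k ∈ Splus) : z ∈ arc (π / (2 * n)) := by
  set θ := Complex.arg (z : ℂ)
  have hcos : ∀ k ∈ Finset.Icc 1 n, 0 ≤ Real.cos (k * |θ|) := by
    intro k hk
    have hk := h k hk
    rwa [← Circle.exp_arg z, ← Circle.exp_nsmul, Splus, Set.mem_ofPred_eq, Circle.coe_exp,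
      Complex.exp_ofReal_mul_I_re, nsmul_eq_mul, ← Real.cos_abs, abs_mul, Nat.abs_cast] at hk
  have hθπ : |θ| ≤ π := abs_le.2 ⟨(Complex.neg_pi_lt_arg _).le, Complex.arg_le_pi _⟩
  have key := mul_le_pi_div_two_of_cos_nonneg (abs_nonneg θ) hθπ n hcos
  refine mem_arc_of_arg_mem_Icc (abs_le.1 ?_)
  rw [le_div_iff₀ (by positivity)]
  linarith

lemma mpow_apply_mem_arc {X : Type*} {K : Set (X → Circle)} {x : X} {c : ℝ}
    (h : ∀ ψ ∈ K, ψ x ∈ arc c) : ∀ n : ℕ, ∀ χ ∈ mpow X K n, χ x ∈ arc (n * c)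
  | 0, χ, hχ => by
    rw [mpow, Set.mem_singleton_iff] at hχ
    simpa [hχ] using one_mem_arc_zero
  | n + 1, _, ⟨χ, hχ, ψ, hψ, rfl⟩ => by
    simpa [add_mul] using mul_mem_arc (mpow_apply_mem_arc h n χ hχ) (h ψ hψ)

section Polars

variable {X : Type*} [AddCommGroup X] [TopologicalSpace X]

lemma IsChar.map_nsmul {χ : X → Circle} (h : IsChar X χ) (k : ℕ) (g : X) :
    χ (k • g) = χ g ^ k := by
  have hzero : χ 0 = 1 := left_eq_mul.1 (by rw [← h.2 0 0, add_zero])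
  induction k with
  | zero => simpa using hzero
  | succ k ih => rw [succ_nsmul, h.2, ih, pow_succ]

lemma seg_mem_nhds [ContinuousAdd X] (n : ℕ) {C : Set X} (hC : C ∈ 𝓝 (0 : X)) :
    seg X n C ∈ 𝓝 (0 : X) := by
  have : seg X n C = ⋂ k ∈ Finset.Icc 1 n, (fun g : X => k • g) ⁻¹' C := by
    ext g; simp [seg]
  rw [this, Filter.biInter_finset_mem]
  exact fun k _ ↦ (continuous_nsmul k).continuousAt.preimage_mem_nhds (by rwa [smul_zero])

lemma invPolar_mem_nhds_of_equicont {K : Set (X → Circle)} (h : Equicont X K) :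
    invPolar X K ∈ 𝓝 (0 : X) := by
  obtain ⟨U, hU, hUK⟩ := h Splus (Filter.mem_of_superset (arc_mem_nhds (by positivity))
    (arc_subset_Splus le_rfl))
  exact Filter.mem_of_superset hU fun g hg χ hχ ↦ hUK χ hχ g hg

lemma equicont_of_invPolar_mem_nhds [ContinuousAdd X] {K : Set (X → Circle)}
    (hK : K ⊆ charSet X) (h : invPolar X K ∈ 𝓝 (0 : X)) : Equicont X K := by
  intro V hV
  obtain ⟨ε, hε, hεV⟩ := exists_arc_subset hV
  obtain ⟨n, hn⟩ := exists_nat_gt (π / (2 * ε))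
  have hn0 : (0 : ℝ) < n := lt_trans (by positivity) hn
  have hnε : π / (2 * n) ≤ ε := by
    rw [div_lt_iff₀ (by positivity)] at hn
    rw [div_le_iff₀ (by positivity)]
    linarith
  refine ⟨seg X n (invPolar X K), seg_mem_nhds n h, fun χ hχ g hg ↦ hεV (arc_mono hnε ?_)⟩
  refine mem_arc_of_pow_mem_Splus (by exact_mod_cast hn0) fun k hk ↦ ?_
  rw [← (hK hχ).map_nsmul]
  exact hg k hk χ hχ

lemma equicont_polarG [ContinuousAdd X] {A : Set X} (hA : A ∈ 𝓝 (0 : X)) :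
    Equicont X (polarG X A) :=
  equicont_of_invPolar_mem_nhds (fun _ hχ ↦ hχ.1)
    (Filter.mem_of_superset hA fun g hg _ hχ ↦ hχ.2 g hg)

lemma invPolar_mpow_mem_nhds {K : Set (X → Circle)} (h : Equicont X K) (n : ℕ) :
    invPolar X (mpow X K n) ∈ 𝓝 (0 : X) := by
  set c := π / 2 / (n + 1)
  have hc : 0 < c := by positivity
  have hnc : n * c ≤ π / 2 := by
    calc (n : ℝ) * c ≤ (n + 1) * c := by linarith
      _ = π / 2 := mul_div_cancel₀ _ (by positivity)
  obtain ⟨U, hU, hUK⟩ := h (arc c) (arc_mem_nhds hc)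
  filter_upwards [hU] with g hg χ hχ
  exact arc_subset_Splus hnc (mpow_apply_mem_arc (fun ψ hψ ↦ hUK ψ hψ g hg) n χ hχ)

end Polars

theorem stmt10 (K : Set (G → Circle)) (hK : K ⊆ charSet G) :
    (Equicont G K ↔ invPolar G K ∈ 𝓝 (0 : G)) ∧
      (Equicont G K → ∀ n : ℕ, 0 < n →
        Equicont G (polarG G (invPolar G (mpow G K n)))) :=
  ⟨⟨invPolar_mem_nhds_of_equicont, equicont_of_invPolar_mem_nhds hK⟩,
    fun h n _ ↦ equicont_polarG (invPolar_mpow_mem_nhds h n)⟩
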